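/- arXiv:2601.06744 — 5 statements merged into one kernel-verified Lean document; each statement's English description precedes it below -/
import Mathlib

section
/- Let V be a 2n-dimensional complex vector space with a non-degenerate symmetric bilinear form g, and let Φ : V → V be an invertible regular linear map (i.e., its minimal polynomial equals its characteristic polynomial) that is self-adjoint with respect to g. Then there exists a maximal isotropic (n-dimensional) subspace W of V with Φ(W) = W if and only if the characteristic polynomial of Φ is the square of some polynomial; moreover, when it exists, such W is unique. -/
/-!
For a regular endomorphism `Φ`, Cayley–Hamilton applied to `Φ` on the range of `p(Φ)` gives
`dim ker p(Φ) ≤ deg p` for every `p ≠ 0`; hence every `Φ`-invariant subspace `W` is the kernel of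
`β(Φ)`, where `β` is the characteristic polynomial of `Φ|W`.

If `W` is moreover Lagrangian, then `W = W^⊥`, and since `β(Φ)` is self-adjoint and kills `W`, it
maps `V` into `W^⊥ = W`. So `β(Φ)² = 0`, and as `χ_Φ` is the minimal polynomial and has degree
`2 dim W = deg β²`, we get `χ_Φ = β²`. Conversely, if `χ_Φ = β²` then `range β(Φ) ⊆ ker β(Φ)`, and
the dimension bound forces equality, which makes `ker β(Φ)` Lagrangian. Uniqueness holds because
a square root of `χ_Φ` is determined up to sign.
-/

open Module Polynomial LinearMap

section

variable {K V : Type*} [Field K] [AddCommGroup V] [Module K V]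

namespace Module.End

lemma commute_aeval (Φ : Module.End K V) (p : K[X]) : Commute Φ (aeval Φ p) := by
  simpa using (commute_X p).map (aeval Φ)

lemma mem_ker_aeval_of_mem (Φ : Module.End K V) (p : K[X]) {x : V}
    (hx : x ∈ ker (aeval Φ p)) : Φ x ∈ ker (aeval Φ p) := by
  rw [mem_ker, ← mul_apply, ← (commute_aeval Φ p).eq, mul_apply, mem_ker.mp hx, map_zero]

lemma aeval_restrict_apply (Φ : Module.End K V) {W : Submodule K V} (hW : ∀ x ∈ W, Φ x ∈ W)
    (p : K[X]) (x : W) : (aeval (Φ.restrict hW) p x : V) = aeval Φ p x := by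
  induction p using Polynomial.induction_on' with
  | add p q hp hq => simp only [map_add, LinearMap.add_apply, Submodule.coe_add, hp, hq]
  | monomial k a =>
    simp only [aeval_monomial, mul_apply, algebraMap_end_apply, pow_restrict k, restrict_apply,
      Submodule.coe_smul]

lemma finrank_ker_aeval_le_natDegree [FiniteDimensional K V] {Φ : Module.End K V}
    (hreg : minpoly K Φ = Φ.charpoly) {p : K[X]} (hp : p ≠ 0) :
    finrank K (ker (aeval Φ p)) ≤ p.natDegree := by
  have hrank := finrank_range_add_finrank_ker (aeval Φ p)
  set R := range (aeval Φ p)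
  have hR : ∀ x ∈ R, Φ x ∈ R := by
    rintro _ ⟨y, rfl⟩
    exact ⟨Φ y, by rw [← mul_apply, ← (commute_aeval Φ p).eq, mul_apply]⟩
  set q := (Φ.restrict hR).charpoly
  have hqp : aeval Φ (q * p) = 0 := by
    ext x
    rw [map_mul, mul_apply, ← aeval_restrict_apply Φ hR q ⟨_, mem_range_self _ x⟩,
      aeval_self_charpoly]
    rfl
  have hdeg : finrank K V ≤ finrank K R + p.natDegree :=
    calc finrank K V = (minpoly K Φ).natDegree := by rw [hreg, charpoly_natDegree]
      _ ≤ (q * p).natDegree :=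
        natDegree_le_of_dvd (minpoly.dvd K Φ hqp) (mul_ne_zero (charpoly_monic _).ne_zero hp)
      _ ≤ q.natDegree + p.natDegree := natDegree_mul_le
      _ = finrank K R + p.natDegree := by rw [charpoly_natDegree]
  omega

lemma eq_ker_aeval_charpoly_restrict [FiniteDimensional K V] {Φ : Module.End K V}
    (hreg : minpoly K Φ = Φ.charpoly) {W : Submodule K V} (hW : ∀ x ∈ W, Φ x ∈ W) :
    W = ker (aeval Φ (Φ.restrict hW).charpoly) := by
  have hle : W ≤ ker (aeval Φ (Φ.restrict hW).charpoly) := fun x hx => by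
    rw [mem_ker, ← aeval_restrict_apply Φ hW _ ⟨x, hx⟩, aeval_self_charpoly]
    rfl
  refine Submodule.eq_of_le_of_finrank_le hle ?_
  calc _ ≤ (Φ.restrict hW).charpoly.natDegree :=
        finrank_ker_aeval_le_natDegree hreg (charpoly_monic _).ne_zero
    _ = finrank K W := charpoly_natDegree _

lemma ker_aeval_eq_of_sq_eq (Φ : Module.End K V) {β γ : K[X]} (h : β ^ 2 = γ ^ 2) :
    ker (aeval Φ β) = ker (aeval Φ γ) := by
  rcases sq_eq_sq_iff_eq_or_eq_neg.mp h with rfl | rfl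
  · rfl
  · rw [map_neg, ker_neg]

end Module.End

lemma LinearMap.IsAdjointPair.aeval {M : Type*} [AddCommGroup M] [Module K M]
    {B : V →ₗ[K] V →ₗ[K] M} {Φ : Module.End K V} (h : IsAdjointPair B B Φ Φ) (p : K[X]) :
    IsAdjointPair B B (aeval Φ p) (aeval Φ p) := by
  induction p using Polynomial.induction_on with
  | C a => simpa [algebraMap_end_eq_smul_id] using (isAdjointPair_id (B := B)).smul a
  | add p q hp hq => rw [map_add]; exact hp.add hq
  | monomial k a ih =>
    have hX : Polynomial.aeval Φ (C a * X ^ (k + 1)) =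
        Φ * Polynomial.aeval Φ (C a * X ^ k) := by
      rw [pow_succ', mul_left_comm, map_mul, aeval_X]
    convert h.mul ih using 2
    rw [hX, (Module.End.commute_aeval Φ _).eq]

lemma Submodule.map_eq_self_of_injective [FiniteDimensional K V] {f : Module.End K V}
    (hf : Function.Injective f) {W : Submodule K V} (hW : ∀ x ∈ W, f x ∈ W) : W.map f = W :=
  Submodule.eq_of_le_of_finrank_le (Submodule.map_le_iff_le_comap.mpr hW)
    (Submodule.equivMapOfInjective f hf W).finrank_eq.le

lemma LinearMap.BilinForm.orthogonal_eq_self_of_isotropic [FiniteDimensional K V]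
    {B : LinearMap.BilinForm K V} (hB : ker B = ⊥) {W : Submodule K V}
    (hiso : ∀ u ∈ W, ∀ v ∈ W, B u v = 0) (hdim : finrank K V = 2 * finrank K W) :
    B.orthogonal W = W := by
  have h := finrank_add_finrank_orthogonal' (B := B) W
  rw [hB, inf_bot_eq, finrank_bot] at h
  have hle : W ≤ B.orthogonal W := fun x hx =>
    LinearMap.BilinForm.mem_orthogonal_iff.mpr fun y hy => hiso y hy x hx
  exact (Submodule.eq_of_le_of_finrank_le hle (by omega)).symm

namespace Module.End

variable [FiniteDimensional K V] {Φ : Module.End K V}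

lemma charpoly_eq_charpoly_restrict_sq {B : LinearMap.BilinForm K V} (hB : ker B = ⊥)
    (hΦ : IsAdjointPair B B Φ Φ) (hreg : minpoly K Φ = Φ.charpoly) {W : Submodule K V}
    (hW : ∀ x ∈ W, Φ x ∈ W) (hiso : ∀ u ∈ W, ∀ v ∈ W, B u v = 0)
    (hdim : finrank K V = 2 * finrank K W) :
    Φ.charpoly = (Φ.restrict hW).charpoly ^ 2 := by
  set β := (Φ.restrict hW).charpoly
  have hker : W = ker (aeval Φ β) := eq_ker_aeval_charpoly_restrict hreg hW
  have hkill : ∀ y ∈ W, aeval Φ β y = 0 := fun y hy => mem_ker.mp (hker ▸ hy)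
  have hrange : ∀ x, aeval Φ β x ∈ W := fun x => by
    rw [← B.orthogonal_eq_self_of_isotropic hB hiso hdim, LinearMap.BilinForm.mem_orthogonal_iff]
    intro y hy
    rw [← hΦ.aeval β y x, hkill y hy, map_zero, LinearMap.zero_apply]
  have hsq : aeval Φ (β ^ 2) = 0 := by
    ext x
    rw [sq, map_mul, mul_apply, hkill _ (hrange x)]
    rfl
  refine (eq_of_monic_of_dvd_of_natDegree_le (charpoly_monic Φ) ((charpoly_monic _).pow 2)
    (hreg ▸ minpoly.dvd K Φ hsq) ?_).symm
  rw [natDegree_pow, charpoly_natDegree, charpoly_natDegree, hdim, mul_comm]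

lemma range_aeval_eq_ker_of_charpoly_eq_sq (hreg : minpoly K Φ = Φ.charpoly) {β : K[X]}
    (hβ : Φ.charpoly = β ^ 2) : range (aeval Φ β) = ker (aeval Φ β) := by
  have hle : range (aeval Φ β) ≤ ker (aeval Φ β) := by
    rintro _ ⟨x, rfl⟩
    rw [mem_ker, ← mul_apply, ← map_mul, ← sq, ← hβ, aeval_self_charpoly, LinearMap.zero_apply]
  have hβ0 : β ≠ 0 := fun h => (charpoly_monic Φ).ne_zero (by rw [hβ, h, zero_pow two_ne_zero])
  have hdeg : finrank K V = 2 * β.natDegree := by rw [← charpoly_natDegree Φ, hβ, natDegree_pow]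
  have hker := finrank_ker_aeval_le_natDegree hreg hβ0
  have hrank := finrank_range_add_finrank_ker (aeval Φ β)
  exact Submodule.eq_of_le_of_finrank_le hle (by omega)

lemma isotropic_ker_aeval_of_charpoly_eq_sq {M : Type*} [AddCommGroup M] [Module K M]
    {B : V →ₗ[K] V →ₗ[K] M} (hΦ : IsAdjointPair B B Φ Φ)
    (hreg : minpoly K Φ = Φ.charpoly) {β : K[X]} (hβ : Φ.charpoly = β ^ 2) :
    ∀ u ∈ ker (aeval Φ β), ∀ v ∈ ker (aeval Φ β), B u v = 0 := by
  intro u hu v hv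
  obtain ⟨x, rfl⟩ := (range_aeval_eq_ker_of_charpoly_eq_sq hreg hβ).ge hu
  rw [hΦ.aeval β, mem_ker.mp hv, map_zero]

end Module.End

end

open Module.End

theorem stmt_3_general (n : ℕ) (V : Type*) [AddCommGroup V] [Module ℂ V] [FiniteDimensional ℂ V]
    (hdim : finrank ℂ V = 2 * n)
    (g : V →ₗ[ℂ] V →ₗ[ℂ] ℂ)
    (hnd : ∀ u : V, (∀ v : V, g u v = 0) → u = 0)
    (Φ : Module.End ℂ V)
    (hinv : Function.Bijective Φ)
    (hsa : ∀ u v : V, g (Φ u) v = g u (Φ v))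
    (hreg : minpoly ℂ Φ = LinearMap.charpoly Φ) :
    ((∃ W : Submodule ℂ V,
        finrank ℂ W = n ∧ (∀ u ∈ W, ∀ v ∈ W, g u v = 0) ∧ W.map Φ = W) ↔
      ∃ β : Polynomial ℂ, LinearMap.charpoly Φ = β ^ 2) ∧
    (∀ W W' : Submodule ℂ V,
      (finrank ℂ W = n ∧ (∀ u ∈ W, ∀ v ∈ W, g u v = 0) ∧ W.map Φ = W) →
      (finrank ℂ W' = n ∧ (∀ u ∈ W', ∀ v ∈ W', g u v = 0) ∧ W'.map Φ = W') →
      W = W') := by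
  have hg : ker g = ⊥ :=
    ker_eq_bot'.mpr fun u hu => hnd u fun v => by rw [hu, LinearMap.zero_apply]
  have hΦ : IsAdjointPair g g Φ Φ := hsa
  have hsqrt : ∀ W : Submodule ℂ V,
      finrank ℂ W = n ∧ (∀ u ∈ W, ∀ v ∈ W, g u v = 0) ∧ W.map Φ = W →
      ∃ β : ℂ[X], Φ.charpoly = β ^ 2 ∧ W = ker (aeval Φ β) := by
    rintro W ⟨hWn, hiso, hWΦ⟩
    have hW : ∀ x ∈ W, Φ x ∈ W := fun x hx => hWΦ ▸ Submodule.mem_map_of_mem hx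
    exact ⟨_, charpoly_eq_charpoly_restrict_sq hg hΦ hreg hW hiso (by omega),
      eq_ker_aeval_charpoly_restrict hreg hW⟩
  refine ⟨⟨fun ⟨W, hW⟩ => ?_, fun ⟨β, hβ⟩ => ?_⟩, fun W W' hW hW' => ?_⟩
  · obtain ⟨β, hβ, -⟩ := hsqrt W hW
    exact ⟨β, hβ⟩
  · refine ⟨ker (aeval Φ β), ?_, isotropic_ker_aeval_of_charpoly_eq_sq hΦ hreg hβ,
      Submodule.map_eq_self_of_injective hinv.1 fun x => mem_ker_aeval_of_mem Φ β⟩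
    have hrank := finrank_range_add_finrank_ker (aeval Φ β)
    rw [range_aeval_eq_ker_of_charpoly_eq_sq hreg hβ] at hrank
    omega
  · obtain ⟨β, hβ, rfl⟩ := hsqrt W hW
    obtain ⟨γ, hγ, rfl⟩ := hsqrt W' hW'
    exact ker_aeval_eq_of_sq_eq Φ (hβ.symm.trans hγ)

/-- Let `V` be a `2n`-dimensional complex vector space with a non-degenerate symmetric
bilinear form `g`, and let `Φ` be an invertible regular (minimal polynomial equals
characteristic polynomial) endomorphism which is self-adjoint with respect to `g`.
Then there exists a maximal isotropic (`n`-dimensional) subspace `W` with `Φ(W) = W`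
if and only if the characteristic polynomial of `Φ` is a square; moreover such a `W`
is unique when it exists. -/
theorem stmt_3 (n : ℕ) (V : Type*) [AddCommGroup V] [Module ℂ V] [FiniteDimensional ℂ V]
    (hdim : finrank ℂ V = 2 * n)
    (g : V →ₗ[ℂ] V →ₗ[ℂ] ℂ)
    (hsymm : ∀ u v : V, g u v = g v u)
    (hnd : ∀ u : V, (∀ v : V, g u v = 0) → u = 0)
    (Φ : Module.End ℂ V)
    (hinv : Function.Bijective Φ)
    (hsa : ∀ u v : V, g (Φ u) v = g u (Φ v))
    (hreg : minpoly ℂ Φ = LinearMap.charpoly Φ) :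
    ((∃ W : Submodule ℂ V,
        finrank ℂ W = n ∧ (∀ u ∈ W, ∀ v ∈ W, g u v = 0) ∧ W.map Φ = W) ↔
      ∃ β : Polynomial ℂ, LinearMap.charpoly Φ = β ^ 2) ∧
    (∀ W W' : Submodule ℂ V,
      (finrank ℂ W = n ∧ (∀ u ∈ W, ∀ v ∈ W, g u v = 0) ∧ W.map Φ = W) →
      (finrank ℂ W' = n ∧ (∀ u ∈ W', ∀ v ∈ W', g u v = 0) ∧ W'.map Φ = W') →
      W = W') :=
  stmt_3_general n V hdim g hnd Φ hinv hsa hreg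
end

section
/- Let V be a 2n-dimensional complex vector space with a non-degenerate symmetric bilinear form g, and let Φ : V → V be an invertible regular linear map that is anti-self-adjoint with respect to g (g(Φu,v) = −g(u,Φv)). Then there exists a maximal isotropic subspace W of V with Φ(W) = W if and only if the characteristic polynomial α(X) of Φ factors as α(X) = β(X)·β(−X) for some polynomial β. -/
open Module Polynomial
section
variable {V : Type*} [AddCommGroup V] [Module ℂ V]

lemma adjoint_aeval (g : V →ₗ[ℂ] V →ₗ[ℂ] ℂ) (Ψ Ψ' : Module.End ℂ V)
    (h : ∀ u v, g (Ψ u) v = g u (Ψ' v)) (p : ℂ[X]) (u v : V) :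
    g ((aeval Ψ p) u) v = g u ((aeval Ψ' p) v) := by
  have hpow : ∀ (k : ℕ) (u v : V), g ((Ψ ^ k) u) v = g u ((Ψ' ^ k) v) := by
    intro k
    induction k with
    | zero => intro u v; simp
    | succ k ih =>
      intro u v
      rw [pow_succ', pow_succ]
      have h1 : (Ψ * Ψ ^ k) u = Ψ ((Ψ ^ k) u) := rfl
      have h2 : (Ψ' ^ k * Ψ') v = (Ψ' ^ k) (Ψ' v) := rfl
      rw [h1, h2, h, ih]
  induction p using Polynomial.induction_on' with
  | add p q hp hq => simp [hp, hq]
  | monomial k c =>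
    simp only [aeval_monomial]
    have h1 : ((algebraMap ℂ (Module.End ℂ V)) c * Ψ ^ k) u = c • ((Ψ ^ k) u) := rfl
    have h2 : ((algebraMap ℂ (Module.End ℂ V)) c * Ψ' ^ k) v = c • ((Ψ' ^ k) v) := rfl
    rw [h1, h2, map_smul, LinearMap.smul_apply, map_smul, hpow]

lemma aeval_restrict_coe {W : Submodule ℂ V} {Φ : Module.End ℂ V}
    (h : ∀ x ∈ W, Φ x ∈ W) (p : ℂ[X]) (x : W) :
    aeval Φ p (x : V) = ((aeval (Φ.restrict h) p x : W) : V) := by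
  induction p using Polynomial.induction_on' with
  | add p q hp hq => simp [hp, hq]
  | monomial k c =>
    simp only [aeval_monomial]
    have h1 : ((algebraMap ℂ (Module.End ℂ V)) c * Φ ^ k) (x : V) = c • ((Φ ^ k) (x : V)) := rfl
    have h2 : ((algebraMap ℂ (Module.End ℂ W)) c * (Φ.restrict h) ^ k) x
        = c • (((Φ.restrict h) ^ k) x) := rfl
    rw [h1, h2, Module.End.pow_restrict, LinearMap.restrict_apply]
    rfl

lemma mkQ_aeval {U : Submodule ℂ V} {Φ : Module.End ℂ V}
    (h : U ≤ U.comap Φ) (p : ℂ[X]) (x : V) :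
    U.mkQ (aeval Φ p x) = aeval (U.mapQ U Φ h) p (U.mkQ x) := by
  induction p using Polynomial.induction_on' with
  | add p q hp hq => simp only [map_add, LinearMap.add_apply, hp, hq]
  | monomial k c =>
    simp only [aeval_monomial]
    have hpow : ∀ (k : ℕ) (x : V), U.mkQ ((Φ ^ k) x) = ((U.mapQ U Φ h) ^ k) (U.mkQ x) := by
      intro k
      induction k with
      | zero => intro x; simp
      | succ k ih =>
        intro x
        rw [pow_succ', pow_succ']
        have h1 : (Φ * Φ ^ k) x = Φ ((Φ ^ k) x) := rfl
        have h2 : (U.mapQ U Φ h * (U.mapQ U Φ h) ^ k) (U.mkQ x)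
            = ((U.mapQ U Φ h) ^ k) ((U.mapQ U Φ h) (U.mkQ x)) := by
          rw [← pow_succ', pow_succ]; rfl
        have h3 : (U.mapQ U Φ h) (U.mkQ x) = U.mkQ (Φ x) := by
          rfl
        rw [h1, h2, h3]
        have h4 : (Φ * Φ ^ k) x = (Φ ^ k) (Φ x) := by
          rw [← pow_succ', pow_succ]; rfl
        rw [← ih (Φ x), ← h4, h1]
    have h1 : ((algebraMap ℂ (Module.End ℂ V)) c * Φ ^ k) x = c • ((Φ ^ k) x) := rfl
    have h2 : ((algebraMap ℂ (Module.End ℂ (V ⧸ U))) c * (U.mapQ U Φ h) ^ k) (U.mkQ x)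
        = c • (((U.mapQ U Φ h) ^ k) (U.mkQ x)) := rfl
    rw [h1, h2, map_smul, hpow]
end

section
variable {V : Type*} [AddCommGroup V] [Module ℂ V] [FiniteDimensional ℂ V]

lemma ker_aeval_mul_le (Φ : Module.End ℂ V) (p q : ℂ[X]) :
    finrank ℂ (LinearMap.ker (aeval Φ (p * q)))
      ≤ finrank ℂ (LinearMap.ker (aeval Φ p)) + finrank ℂ (LinearMap.ker (aeval Φ q)) := by
  set A := aeval Φ p
  set B := aeval Φ q
  set K := LinearMap.ker (aeval Φ (p * q))
  have hAB : aeval Φ (p * q) = A * B := map_mul _ _ _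
  set f : K →ₗ[ℂ] V := B.domRestrict K with hf
  have h1 : finrank ℂ (LinearMap.range f) + finrank ℂ (LinearMap.ker f) = finrank ℂ K :=
    LinearMap.finrank_range_add_finrank_ker f
  have h2 : LinearMap.range f ≤ LinearMap.ker A := by
    rintro _ ⟨⟨x, hx⟩, rfl⟩
    have : (A * B) x = 0 := by rw [← hAB]; exact hx
    simpa [f] using this
  have h3 : finrank ℂ (LinearMap.ker f) ≤ finrank ℂ (LinearMap.ker B) := by
    have hle : (LinearMap.ker f).map K.subtype ≤ LinearMap.ker B := by
      rintro _ ⟨⟨x, hxK⟩, hxf, rfl⟩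
      simpa [f] using hxf
    have := Submodule.finrank_mono hle
    rwa [Submodule.finrank_map_subtype_eq] at this
  calc finrank ℂ K = finrank ℂ (LinearMap.range f) + finrank ℂ (LinearMap.ker f) := h1.symm
    _ ≤ finrank ℂ (LinearMap.ker A) + finrank ℂ (LinearMap.ker B) :=
        Nat.add_le_add (Submodule.finrank_mono h2) h3

lemma eigen_bound (Φ : Module.End ℂ V)
    (hreg : minpoly ℂ Φ = LinearMap.charpoly Φ) (lam : ℂ) :
    finrank ℂ (LinearMap.ker (aeval Φ (X - C lam))) ≤ 1 := by
  set K := LinearMap.ker (aeval Φ (X - C lam)) with hK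
  have hinv : K ≤ K.comap Φ := by
    intro x hx
    have hx0 : (aeval Φ (X - C lam)) x = 0 := hx
    rw [map_sub, aeval_X, aeval_C, LinearMap.sub_apply,
      Module.algebraMap_end_apply, sub_eq_zero] at hx0
    have hΦx : Φ x = lam • x := hx0
    simp only [Submodule.mem_comap, hΦx]
    exact K.smul_mem lam hx
  set Φ'' := K.mapQ K Φ hinv
  set p'' := LinearMap.charpoly Φ''
  have hann : aeval Φ ((X - C lam) * p'') = 0 := by
    ext v
    rw [map_mul]
    have hmem : aeval Φ p'' v ∈ K := by
      rw [← Submodule.ker_mkQ K, LinearMap.mem_ker, mkQ_aeval hinv,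
        LinearMap.aeval_self_charpoly]
      rfl
    have : ((aeval Φ (X - C lam)) * (aeval Φ p'')) v
        = (aeval Φ (X - C lam)) (aeval Φ p'' v) := rfl
    rw [this]
    exact hmem
  have hdvd : minpoly ℂ Φ ∣ (X - C lam) * p'' := minpoly.dvd _ _ hann
  have hne : ((X - C lam) * p'' : ℂ[X]) ≠ 0 :=
    ((monic_X_sub_C lam).mul (LinearMap.charpoly_monic Φ'')).ne_zero
  have hdeg := Polynomial.natDegree_le_of_dvd hdvd hne
  rw [hreg, LinearMap.charpoly_natDegree] at hdeg
  rw [Polynomial.natDegree_mul (monic_X_sub_C lam).ne_zero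
    (LinearMap.charpoly_monic Φ'').ne_zero, natDegree_X_sub_C,
    LinearMap.charpoly_natDegree] at hdeg
  have hq := Submodule.finrank_quotient_add_finrank K
  omega

lemma ker_aeval_bound (Φ : Module.End ℂ V)
    (hreg : minpoly ℂ Φ = LinearMap.charpoly Φ) (p : ℂ[X]) (hp : p ≠ 0) :
    finrank ℂ (LinearMap.ker (aeval Φ p)) ≤ p.natDegree := by
  suffices H : ∀ (d : ℕ) (p : ℂ[X]), p ≠ 0 → p.natDegree = d →
      finrank ℂ (LinearMap.ker (aeval Φ p)) ≤ d by
    exact H p.natDegree p hp rfl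
  clear hp p
  intro d
  induction d using Nat.strong_induction_on with
  | _ d ih =>
  intro p hp hd
  rcases Nat.eq_zero_or_pos d with h0 | hpos
  · subst h0
    obtain ⟨c, rfl⟩ := Polynomial.natDegree_eq_zero.mp hd
    have hc0 : c ≠ 0 := by rintro rfl; simp at hp
    have hker : LinearMap.ker (aeval Φ (C c)) = ⊥ := by
      rw [aeval_C]
      ext x
      simp [Module.algebraMap_end_apply, hc0]
    rw [hker, finrank_bot]
  · obtain ⟨lam, hlam⟩ : ∃ lam, p.IsRoot lam := by
      apply Complex.exists_root
      rw [← Polynomial.natDegree_pos_iff_degree_pos, hd]; exact hpos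
    obtain ⟨p₁, hp₁⟩ := Polynomial.dvd_iff_isRoot.mpr hlam
    have hp₁0 : p₁ ≠ 0 := by rintro rfl; simp at hp₁; exact hp hp₁
    have hdeg : d = 1 + p₁.natDegree := by
      rw [← hd, hp₁, Polynomial.natDegree_mul (X_sub_C_ne_zero lam) hp₁0, natDegree_X_sub_C]
    have h1 := ker_aeval_mul_le Φ (X - C lam) p₁
    have h2 := eigen_bound Φ hreg lam
    have h3 := ih p₁.natDegree (by omega) p₁ hp₁0 rfl
    rw [hp₁]
    omega
end


theorem stmt_4_forward (n : ℕ) (V : Type*) [AddCommGroup V] [Module ℂ V] [FiniteDimensional ℂ V]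
    (hdim : finrank ℂ V = 2 * n)
    (g : V →ₗ[ℂ] V →ₗ[ℂ] ℂ)
    (hsymm : ∀ u v : V, g u v = g v u)
    (hnd : ∀ u : V, (∀ v : V, g u v = 0) → u = 0)
    (Φ : Module.End ℂ V)
    (hsa : ∀ u v : V, g (Φ u) v = - g u (Φ v))
    (hreg : minpoly ℂ Φ = LinearMap.charpoly Φ)
    (W : Submodule ℂ V) (hWn : finrank ℂ W = n)
    (hiso : ∀ u ∈ W, ∀ v ∈ W, g u v = 0) (hWinv : ∀ x ∈ W, Φ x ∈ W) :
    ∃ β : Polynomial ℂ, LinearMap.charpoly Φ = β * β.comp (-Polynomial.X) := by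
  classical
  -- the adjoint relations
  have hadj : ∀ (p : ℂ[X]) (u v : V), g ((aeval Φ p) u) v = g u ((aeval (-Φ) p) v) :=
    fun p u v => adjoint_aeval g Φ (-Φ) (fun u v => by
      rw [hsa]; simp) p u v
  have hadj' : ∀ (p : ℂ[X]) (u v : V), g ((aeval (-Φ) p) u) v = g u ((aeval Φ p) v) :=
    fun p u v => adjoint_aeval g (-Φ) Φ (fun u v => by
      have := hsa u v
      simp only [LinearMap.neg_apply, map_neg, LinearMap.neg_apply]
      rw [hsa]; ring) p u v
  -- β = charpoly of the restriction
  set ΦW := Φ.restrict hWinv with hΦW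
  set β := LinearMap.charpoly ΦW with hβ
  have hβmonic : β.Monic := LinearMap.charpoly_monic ΦW
  have hβdeg : β.natDegree = n := by rw [hβ, LinearMap.charpoly_natDegree, hWn]
  have hβW : ∀ w ∈ W, aeval Φ β w = 0 := by
    intro w hw
    rw [show w = ((⟨w, hw⟩ : W) : V) from rfl, aeval_restrict_coe hWinv,
      LinearMap.aeval_self_charpoly]
    rfl
  -- W is its own orthogonal complement
  set φ : V →ₗ[ℂ] Module.Dual ℂ W := (W.subtype.dualMap) ∘ₗ g with hφ
  have hφsurj : Function.Surjective φ := by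
    have h1 : Function.Surjective (W.subtype.dualMap) :=
      LinearMap.dualMap_surjective_of_injective W.injective_subtype
    have h2 : Function.Surjective (g : V →ₗ[ℂ] Module.Dual ℂ V) := by
      have hinj : Function.Injective (g : V →ₗ[ℂ] Module.Dual ℂ V) := by
        rw [← LinearMap.ker_eq_bot]
        ext x
        simp only [LinearMap.mem_ker, Submodule.mem_bot]
        constructor
        · intro hx
          exact hnd x (fun v => by rw [show g x v = (g x) v from rfl, hx]; rfl)
        · rintro rfl; simp
      exact (LinearMap.injective_iff_surjective_of_finrank_eq_finrank
        (Subspace.dual_finrank_eq).symm).mp hinj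
    exact h1.comp h2
  have hkerφ : ∀ v : V, v ∈ LinearMap.ker φ ↔ ∀ w ∈ W, g v w = 0 := by
    intro v
    simp only [LinearMap.mem_ker, hφ, LinearMap.comp_apply]
    constructor
    · intro h w hw
      exact congrFun (congrArg DFunLike.coe h) ⟨w, hw⟩
    · intro h
      ext ⟨w, hw⟩
      exact h w hw
  have hkerfin : finrank ℂ (LinearMap.ker φ) = n := by
    have := LinearMap.finrank_range_add_finrank_ker φ
    rw [LinearMap.range_eq_top.mpr hφsurj, finrank_top, Subspace.dual_finrank_eq, hWn,
      hdim] at this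
    omega
  have hWorth : LinearMap.ker φ = W := by
    have hle : W ≤ LinearMap.ker φ := by
      intro u hu
      rw [hkerφ]
      intro w hw
      exact hiso u hu w hw
    exact (Submodule.eq_of_le_of_finrank_le hle (by rw [hkerfin, hWn])).symm
  -- the annihilating polynomial
  have hcomp : aeval Φ (β.comp (-X)) = aeval (-Φ) β := by
    rw [aeval_comp]; simp
  have hmemW : ∀ v : V, aeval Φ (β.comp (-X)) v ∈ W := by
    intro v
    rw [← hWorth, hkerφ]
    intro w hw
    rw [hcomp, hadj' β v w, hβW w hw]
    simp
  have hγ : aeval Φ (β * β.comp (-X)) = 0 := by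
    ext v
    rw [map_mul]
    have : ((aeval Φ β) * (aeval Φ (β.comp (-X)))) v
        = (aeval Φ β) (aeval Φ (β.comp (-X)) v) := rfl
    rw [this, hβW _ (hmemW v)]
    rfl
  -- compare degrees and leading coefficients
  have hXne : (-X : ℂ[X]).natDegree ≠ 0 := by simp
  have hlc : (β.comp (-X)).leadingCoeff = (-1 : ℂ) ^ n := by
    rw [Polynomial.leadingCoeff_comp hXne, hβmonic.leadingCoeff, hβdeg]
    simp
  have hcompne : β.comp (-X) ≠ 0 := by
    intro h
    have h2 : ((0:ℂ[X])).leadingCoeff = (-1 : ℂ) ^ n := h ▸ hlc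
    rw [leadingCoeff_zero] at h2
    exact pow_ne_zero n (by norm_num : (-1:ℂ) ≠ 0) h2.symm
  have hcompdeg : (β.comp (-X)).natDegree = n := by
    rw [Polynomial.natDegree_comp, hβdeg]; simp
  have hdvd : LinearMap.charpoly Φ ∣ β * β.comp (-X) := by
    rw [← hreg]; exact minpoly.dvd _ _ hγ
  obtain ⟨t, ht⟩ := hdvd
  have hαmonic : (LinearMap.charpoly Φ).Monic := LinearMap.charpoly_monic Φ
  have hγne : β * β.comp (-X) ≠ 0 := mul_ne_zero hβmonic.ne_zero hcompne
  have htne : t ≠ 0 := by rintro rfl; rw [mul_zero] at ht; exact hγne ht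
  have htdeg : t.natDegree = 0 := by
    have h1 : (β * β.comp (-X)).natDegree = 2 * n := by
      rw [Polynomial.natDegree_mul hβmonic.ne_zero hcompne, hβdeg, hcompdeg]; omega
    have h2 : (LinearMap.charpoly Φ).natDegree = 2 * n := by
      rw [LinearMap.charpoly_natDegree, hdim]
    rw [ht, Polynomial.natDegree_mul hαmonic.ne_zero htne, h2] at h1
    omega
  obtain ⟨c, rfl⟩ := Polynomial.natDegree_eq_zero.mp htdeg
  have hc : c = (-1 : ℂ) ^ n := by
    have h1 : (β * β.comp (-X)).leadingCoeff = (-1 : ℂ) ^ n := by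
      rw [leadingCoeff_mul, hβmonic.leadingCoeff, hlc]; ring
    rw [ht, leadingCoeff_mul, hαmonic.leadingCoeff, leadingCoeff_C] at h1
    rw [← h1]; ring
  subst hc
  refine ⟨C (Complex.I ^ n) * β, ?_⟩
  have hI : (Complex.I ^ n) * (Complex.I ^ n) = (-1 : ℂ) ^ n := by
    rw [← pow_add, ← two_mul, pow_mul, Complex.I_sq]
  calc LinearMap.charpoly Φ
      = LinearMap.charpoly Φ * (C ((-1:ℂ) ^ n) * C ((-1:ℂ)^n)) := by
        rw [← C_mul, ← pow_add, ← two_mul, pow_mul]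
        norm_num
    _ = (β * β.comp (-X)) * C ((-1:ℂ)^n) := by rw [ht]; ring
    _ = (C (Complex.I ^ n) * β) * ((C (Complex.I ^ n) * β).comp (-X)) := by
        rw [mul_comp, C_comp, ← hI, C_mul]
        ring

theorem stmt_4_backward (n : ℕ) (V : Type*) [AddCommGroup V] [Module ℂ V] [FiniteDimensional ℂ V]
    (hdim : finrank ℂ V = 2 * n)
    (g : V →ₗ[ℂ] V →ₗ[ℂ] ℂ)
    (Φ : Module.End ℂ V)
    (hinv : Function.Bijective Φ)
    (hsa : ∀ u v : V, g (Φ u) v = - g u (Φ v))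
    (hreg : minpoly ℂ Φ = LinearMap.charpoly Φ)
    (β : Polynomial ℂ) (hfac : LinearMap.charpoly Φ = β * β.comp (-Polynomial.X)) :
    ∃ W : Submodule ℂ V,
        finrank ℂ W = n ∧ (∀ u ∈ W, ∀ v ∈ W, g u v = 0) ∧ W.map Φ = W := by
  classical
  have hadj : ∀ (p : ℂ[X]) (u v : V), g ((aeval Φ p) u) v = g u ((aeval (-Φ) p) v) :=
    fun p u v => adjoint_aeval g Φ (-Φ) (fun u v => by rw [hsa]; simp) p u v
  set q := β.comp (-X) with hq
  have hαmonic : (LinearMap.charpoly Φ).Monic := LinearMap.charpoly_monic Φ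
  have hα0 : aeval Φ (LinearMap.charpoly Φ) = 0 := LinearMap.aeval_self_charpoly Φ
  have hβne : β ≠ 0 := by
    rintro rfl; rw [zero_mul] at hfac; exact hαmonic.ne_zero hfac
  have hqne : q ≠ 0 := by
    intro h; rw [h, mul_zero] at hfac; exact hαmonic.ne_zero hfac
  have hqdeg : q.natDegree = β.natDegree := by
    rw [hq, Polynomial.natDegree_comp]; simp
  have hβdeg : β.natDegree = n := by
    have h1 : (LinearMap.charpoly Φ).natDegree = 2 * n := by
      rw [LinearMap.charpoly_natDegree, hdim]
    rw [hfac, Polynomial.natDegree_mul hβne hqne, hqdeg] at h1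
    omega
  set T := aeval Φ q with hT
  set S := aeval Φ β with hS
  have hTS : ∀ x : V, T (S x) = 0 := by
    intro x
    have h : (aeval Φ (q * β)) x = T (S x) := by rw [map_mul]; rfl
    rw [← h, mul_comm q β, ← hfac, hα0]
    simp
  have hST : ∀ x : V, S (T x) = 0 := by
    intro x
    have h : (aeval Φ (β * q)) x = S (T x) := by rw [map_mul]; rfl
    rw [← h, ← hfac, hα0]
    simp
  refine ⟨LinearMap.range T, ?_, ?_, ?_⟩
  · -- dimension
    have h1 : finrank ℂ (LinearMap.range T) + finrank ℂ (LinearMap.ker T) = 2 * n := by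
      rw [LinearMap.finrank_range_add_finrank_ker, hdim]
    have h2 : finrank ℂ (LinearMap.ker T) ≤ n := by
      have := ker_aeval_bound Φ hreg q hqne
      rwa [hqdeg, hβdeg] at this
    have h3 : finrank ℂ (LinearMap.ker S) ≤ n := by
      have := ker_aeval_bound Φ hreg β hβne
      rwa [hβdeg] at this
    have h4 : LinearMap.range S ≤ LinearMap.ker T := by
      rintro _ ⟨x, rfl⟩
      exact LinearMap.mem_ker.mpr (hTS x)
    have h5 : finrank ℂ (LinearMap.range S) ≤ finrank ℂ (LinearMap.ker T) :=
      Submodule.finrank_mono h4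
    have h6 : finrank ℂ (LinearMap.range S) + finrank ℂ (LinearMap.ker S) = 2 * n := by
      rw [LinearMap.finrank_range_add_finrank_ker, hdim]
    omega
  · -- isotropy
    rintro _ ⟨a, rfl⟩ _ ⟨b, rfl⟩
    rw [hT, hadj q a (T b)]
    have hcomp : aeval (-Φ) q = S := by rw [hq, hS, aeval_comp]; simp
    rw [hcomp, hST b]
    simp
  · -- invariance
    have h1 : Submodule.map Φ (LinearMap.range T) = LinearMap.range (Φ ∘ₗ T) :=
      (LinearMap.range_comp T Φ).symm
    have h2 : Φ ∘ₗ T = T ∘ₗ Φ := by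
      rw [← Module.End.mul_eq_comp, ← Module.End.mul_eq_comp]
      have ha : Φ * T = aeval Φ (X * q) := by rw [map_mul, aeval_X]
      have hb : T * Φ = aeval Φ (q * X) := by rw [map_mul, aeval_X]
      rw [ha, hb, mul_comm]
    rw [h1, h2, LinearMap.range_comp Φ T, LinearMap.range_eq_top.mpr hinv.surjective,
      Submodule.map_top]

/-- Let `V` be a `2n`-dimensional complex vector space with a non-degenerate symmetric
bilinear form `g`, and let `Φ` be an invertible regular endomorphism which is
anti-self-adjoint with respect to `g` (`g(Φu,v) = -g(u,Φv)`). Then there exists a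
maximal isotropic subspace `W` with `Φ(W) = W` if and only if the characteristic
polynomial `α(X)` of `Φ` factors as `α(X) = β(X) · β(-X)` for some polynomial `β`. -/
theorem stmt_4 (n : ℕ) (V : Type*) [AddCommGroup V] [Module ℂ V] [FiniteDimensional ℂ V]
    (hdim : finrank ℂ V = 2 * n)
    (g : V →ₗ[ℂ] V →ₗ[ℂ] ℂ)
    (hsymm : ∀ u v : V, g u v = g v u)
    (hnd : ∀ u : V, (∀ v : V, g u v = 0) → u = 0)
    (Φ : Module.End ℂ V)
    (hinv : Function.Bijective Φ)
    (hsa : ∀ u v : V, g (Φ u) v = - g u (Φ v))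
    (hreg : minpoly ℂ Φ = LinearMap.charpoly Φ) :
    (∃ W : Submodule ℂ V,
        finrank ℂ W = n ∧ (∀ u ∈ W, ∀ v ∈ W, g u v = 0) ∧ W.map Φ = W) ↔
      ∃ β : Polynomial ℂ,
        LinearMap.charpoly Φ = β * β.comp (-Polynomial.X) := by
  constructor
  · rintro ⟨W, hWn, hiso, hWmap⟩
    have hWinv : ∀ x ∈ W, Φ x ∈ W := by
      intro x hx
      rw [← hWmap]
      exact Submodule.mem_map_of_mem hx
    exact stmt_4_forward n V hdim g hsymm hnd Φ hsa hreg W hWn hiso hWinv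
  · rintro ⟨β, hfac⟩
    exact stmt_4_backward n V hdim g Φ hinv hsa hreg β hfac
end

section
/- Let U be an m-dimensional complex vector space, J ∈ End(U) with a single Jordan block with eigenvalue λ, and g a non-degenerate symmetric bilinear form on U such that g(Ju, v) = g(u, Jv) for all u, v. Then there exists a basis e_1, …, e_m of U with J(e_i) = λ e_i + e_{i−1} (with e_0 = 0), g(e_i, e_{m+1−i}) = 1, and g(e_i, e_j) = 0 whenever j ≠ m+1−i. -/
open Module

/-- Let `U` be an `m`-dimensional complex vector space, `J` an endomorphism which is a
single Jordan block with eigenvalue `λ`, and `g` a non-degenerate symmetric bilinear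
form on `U` with respect to which `J` is self-adjoint. Then there is a basis
`e_1, …, e_m` with `J e_i = λ e_i + e_{i-1}` (where `e_0 = 0`), `g(e_i, e_{m+1-i}) = 1`
and `g(e_i, e_j) = 0` for `j ≠ m+1-i` (indices written here 0-based). -/
theorem stmt_5 (m : ℕ) (hm : 0 < m) (U : Type*) [AddCommGroup U] [Module ℂ U]
    [FiniteDimensional ℂ U] (hdim : finrank ℂ U = m)
    (lam : ℂ) (J : Module.End ℂ U)
    (hJ1 : (J - lam • 1) ^ m = 0) (hJ2 : (J - lam • 1) ^ (m - 1) ≠ 0)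
    (g : U →ₗ[ℂ] U →ₗ[ℂ] ℂ)
    (hsymm : ∀ u v : U, g u v = g v u)
    (hnd : ∀ u : U, (∀ v : U, g u v = 0) → u = 0)
    (hsa : ∀ u v : U, g (J u) v = g u (J v)) :
    ∃ b : Basis (Fin m) ℂ U,
      (∀ i : Fin m, J (b i) = lam • b i +
        (if (i : ℕ) = 0 then 0
         else b ⟨(i : ℕ) - 1, lt_of_le_of_lt (Nat.sub_le _ _) i.isLt⟩)) ∧
      (∀ i j : Fin m, g (b i) (b j) = if (i : ℕ) + (j : ℕ) = m - 1 then 1 else 0) := by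
  set N : Module.End ℂ U := J - lam • 1 with hNdef
  have hNapp : ∀ x : U, N x = J x - lam • x := by
    intro x; simp [hNdef, LinearMap.sub_apply]
  have hgN : ∀ x y : U, g (N x) y = g x (N y) := by
    intro x y
    rw [hNapp, hNapp]
    simp only [map_sub, map_smul, LinearMap.sub_apply, LinearMap.smul_apply, smul_eq_mul]
    rw [hsa]
  have hpow : ∀ (k : ℕ) (x y : U), g ((N ^ k) x) y = g x ((N ^ k) y) := by
    intro k
    induction k with
    | zero => intro x y; simp
    | succ n ih =>
      intro x y
      rw [pow_succ]
      simp only [Module.End.mul_apply]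
      rw [ih (N x) y, hgN]
      congr 1
      rw [← Module.End.mul_apply, ← Module.End.mul_apply, ← pow_succ, ← pow_succ']
  have hcomb : ∀ (a b : ℕ) (x y : U), g ((N ^ a) x) ((N ^ b) y) = g ((N ^ (a + b)) x) y := by
    intro a b x y
    rw [← hpow b ((N ^ a) x) y, ← Module.End.mul_apply, ← pow_add, Nat.add_comm b a]
  have hbig : ∀ k, m ≤ k → N ^ k = 0 := by
    intro k hk
    rw [show k = m + (k - m) from (Nat.add_sub_cancel' hk).symm, pow_add, hJ1, zero_mul]
  have hzero : ∀ k, m ≤ k → ∀ x y : U, g ((N ^ k) x) y = 0 := by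
    intro k hk x y; rw [hbig k hk]; simp
  have happ : ∀ (p q : ℕ) (x : U), (N ^ p) ((N ^ q) x) = (N ^ (p + q)) x := by
    intro p q x; rw [pow_add, Module.End.mul_apply]
  have hstep : ∀ (k : ℕ) (x : U), N ((N ^ k) x) = (N ^ (k + 1)) x := by
    intro k x; rw [pow_succ', Module.End.mul_apply]
  -- find v with g (N^(m-1) v) v ≠ 0
  have hv : ∃ v : U, g ((N ^ (m - 1)) v) v ≠ 0 := by
    by_contra hcon
    push_neg at hcon
    obtain ⟨u, hu⟩ : ∃ u : U, (N ^ (m - 1)) u ≠ 0 := by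
      by_contra h
      push_neg at h
      exact hJ2 (LinearMap.ext h)
    obtain ⟨w0, hw0⟩ : ∃ w0 : U, g ((N ^ (m - 1)) u) w0 ≠ 0 := by
      by_contra h
      push_neg at h
      exact hu (hnd _ h)
    have hBsymm : g ((N ^ (m - 1)) w0) u = g ((N ^ (m - 1)) u) w0 := by
      rw [hpow, hsymm]
    have h1 := hcon (u + w0)
    simp only [map_add, LinearMap.add_apply] at h1
    rw [hcon u, hcon w0, hBsymm] at h1
    apply hw0
    linear_combination h1 / 2
  -- inductive fixing of the pairing values
  have key : ∀ d : ℕ, ∃ w : U, g ((N ^ (m - 1)) w) w = 1 ∧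
      ∀ k, k < m - 1 → m - 1 - d ≤ k → g ((N ^ k) w) w = 0 := by
    intro d
    induction d with
    | zero =>
      obtain ⟨v, hv⟩ := hv
      obtain ⟨s, hs⟩ := IsAlgClosed.exists_pow_nat_eq ((g ((N ^ (m - 1)) v) v)⁻¹) (n := 2)
        (by norm_num)
      refine ⟨s • v, ?_, ?_⟩
      · simp only [map_smul, LinearMap.smul_apply, smul_eq_mul]
        rw [← mul_assoc, ← pow_two, hs, inv_mul_cancel₀ hv]
      · intro k hk hk'; omega
    | succ d ih =>
      obtain ⟨w, hw1, hw2⟩ := ih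
      by_cases hd : m - 1 ≤ d
      · exact ⟨w, hw1, fun k h1 h2 => hw2 k h1 (by omega)⟩
      · set t := m - 1 - (d + 1) with ht
        have htle : t ≤ m - 2 := by omega
        have hm2 : 2 ≤ m := by omega
        set a : ℂ := -(g ((N ^ t) w) w) / 2 with ha
        have hexpand : ∀ k : ℕ,
            g ((N ^ k) (w + a • (N ^ (m - 1 - t)) w)) (w + a • (N ^ (m - 1 - t)) w)
            = g ((N ^ k) w) w + a * g ((N ^ (k + (m - 1 - t))) w) w
              + a * g ((N ^ (k + (m - 1 - t))) w) w
              + a * (a * g ((N ^ (k + (m - 1 - t) + (m - 1 - t))) w) w) := by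
          intro k
          simp only [map_add, map_smul, LinearMap.add_apply, LinearMap.smul_apply, smul_eq_mul,
            happ]
          rw [hcomb k (m - 1 - t) w w, hcomb (k + (m - 1 - t)) (m - 1 - t) w w]
          ring
        refine ⟨w + a • (N ^ (m - 1 - t)) w, ?_, ?_⟩
        · rw [hexpand, hw1, hzero _ (by omega), hzero _ (by omega)]
          ring
        · intro k hk1 hk2
          rw [hexpand]
          by_cases hkt : k = t
          · rw [hkt, show t + (m - 1 - t) = m - 1 from by omega, hw1,
              hzero (m - 1 + (m - 1 - t)) (by omega), ha]
            ring
          · rw [hw2 k hk1 (by omega), hzero _ (by omega), hzero _ (by omega)]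
            ring
  obtain ⟨w, hw1, hw2⟩ := key (m - 1)
  have hc : ∀ k : ℕ, g ((N ^ k) w) w = if k = m - 1 then 1 else 0 := by
    intro k
    by_cases h : k = m - 1
    · rw [if_pos h, h, hw1]
    · rw [if_neg h]
      rcases lt_or_ge k (m - 1) with h' | h'
      · exact hw2 k h' (by omega)
      · exact hzero k (by omega) w w
  set e : Fin m → U := fun i => (N ^ (m - 1 - (i : ℕ))) w with he
  have hgram : ∀ i j : Fin m, g (e i) (e j) = if (i : ℕ) + (j : ℕ) = m - 1 then 1 else 0 := by
    intro i j
    have hi := i.isLt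
    have hj := j.isLt
    simp only [he]
    rw [hcomb, hc]
    have hiff : (m - 1 - (i : ℕ) + (m - 1 - (j : ℕ)) = m - 1) ↔ ((i : ℕ) + (j : ℕ) = m - 1) := by
      omega
    simp only [hiff]
  have hli : LinearIndependent ℂ e := by
    rw [Fintype.linearIndependent_iff]
    intro c hcsum i
    have hi := i.isLt
    set j : Fin m := ⟨m - 1 - (i : ℕ), by omega⟩ with hjdef
    have h0 : g (∑ k, c k • e k) (e j) = 0 := by rw [hcsum]; simp
    rw [map_sum, LinearMap.sum_apply] at h0
    simp only [map_smul, LinearMap.smul_apply, smul_eq_mul, hgram] at h0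
    rw [Finset.sum_eq_single i] at h0
    · have : (i : ℕ) + ((j : ℕ)) = m - 1 := by simp only [hjdef]; omega
      rw [if_pos this, mul_one] at h0
      exact h0
    · intro k _ hk
      have hcond : ¬((k : ℕ) + (j : ℕ) = m - 1) := by
        intro hcon
        apply hk
        apply Fin.ext
        have := k.isLt
        simp only [hjdef] at hcon
        omega
      rw [if_neg hcond, mul_zero]
    · intro h; exact absurd (Finset.mem_univ i) h
  have hcard : Fintype.card (Fin m) = finrank ℂ U := by simp [hdim]
  haveI : Nonempty (Fin m) := ⟨⟨0, hm⟩⟩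
  refine ⟨basisOfLinearIndependentOfCardEqFinrank hli hcard, ?_, ?_⟩
  · intro i
    rw [coe_basisOfLinearIndependentOfCardEqFinrank]
    have hi := i.isLt
    have hJx : ∀ x : U, J x = lam • x + N x := by
      intro x; rw [hNapp]; abel
    rw [hJx]
    congr 1
    by_cases h0 : (i : ℕ) = 0
    · rw [if_pos h0]
      show N ((N ^ (m - 1 - (i : ℕ))) w) = 0
      rw [hstep, show m - 1 - (i : ℕ) + 1 = m from by omega, hbig m le_rfl]
      simp
    · rw [if_neg h0]
      show N ((N ^ (m - 1 - (i : ℕ))) w) = (N ^ (m - 1 - ((i : ℕ) - 1))) w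
      rw [hstep, show m - 1 - (i : ℕ) + 1 = m - 1 - ((i : ℕ) - 1) from by omega]
  · intro i j
    rw [coe_basisOfLinearIndependentOfCardEqFinrank]
    exact hgram i j
end

section
/- With notation as in the single-slope setting (n = mk + l, 0 ≤ l < m, p_j = m − ⌈jm/n⌉), the reduction modulo t of P^{−1}·R(f)·P is a nilpotent matrix whose Jordan type is the m-balanced partition [(k+1)^l, k^{m−l}] of n. -/
/-!
Write `β i = ⌈(i + 1) m / n⌉`, so that `p i = m - β i`. Modulo `t`, the last column of the
companion matrix dies (the order bounds on the `a i` beat the conjugation exponents) and a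
subdiagonal `1` survives exactly where `β i = β (i + 1)`. So `M` is the nilpotent shift along the
level sets of `β`, and `M ^ s` has rank `∑ (size - s)` over these blocks. The level sets are the
intervals `[⌊v n / m⌋, ⌊(v + 1) n / m⌋)`, `v < m`, of length `k` or `k + 1`, and since their
lengths add up to `n = m k + l`, exactly `l` of them have length `k + 1`.
-/

open Finset

theorem Nat.ceilDiv_add_le (a b c : ℕ) : (a + b) ⌈/⌉ c ≤ a ⌈/⌉ c + b ⌈/⌉ c := by
  rcases c.eq_zero_or_pos with rfl | hc
  · simp
  rw [ceilDiv_le_iff_le_mul hc, mul_add]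
  exact add_le_add ((ceilDiv_le_iff_le_mul hc).1 le_rfl) ((ceilDiv_le_iff_le_mul hc).1 le_rfl)

theorem Nat.add_div_sub_div_eq_or {m k l : ℕ} (hm : 0 < m) (hl : l < m) (x : ℕ) :
    (x + (m * k + l)) / m - x / m = k ∨ (x + (m * k + l)) / m - x / m = k + 1 := by
  rw [add_comm (m * k), ← add_assoc, Nat.add_mul_div_left _ _ hm]
  have h₁ : x / m ≤ (x + l) / m := Nat.div_le_div_right (Nat.le_add_right x l)
  have h₂ : (x + l) / m ≤ x / m + 1 := by
    rw [← Nat.add_div_right x hm]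
    exact Nat.div_le_div_right (by omega)
  omega

theorem sum_tsub_of_eq_or_eq_succ {ι : Type*} (S : Finset ι) (d : ι → ℕ) {k l : ℕ}
    (hd : ∀ v ∈ S, d v = k ∨ d v = k + 1) (hsum : ∑ v ∈ S, d v = #S * k + l) (s : ℕ) :
    ∑ v ∈ S, (d v - s) = l * (k + 1 - s) + (#S - l) * (k - s) := by
  classical
  have hsplit : ∀ f : ℕ → ℕ, ∑ v ∈ S, f (d v) =
      #(S.filter (d · = k + 1)) * f (k + 1) + #(S.filter (¬ d · = k + 1)) * f k := by
    intro f
    rw [← sum_filter_add_sum_filter_not S (d · = k + 1),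
      sum_congr rfl fun v hv => congrArg f (mem_filter.1 hv).2,
      sum_congr rfl fun v hv => congrArg f (((hd v (mem_filter.1 hv).1).resolve_right
        (mem_filter.1 hv).2)), sum_const, sum_const, smul_eq_mul, smul_eq_mul]
  have hcard := card_filter_add_card_filter_not (s := S) (p := (d · = k + 1))
  have hlarge : #(S.filter (d · = k + 1)) = l := by
    have := hsplit id
    simp only [id] at this
    nlinarith
  rw [hsplit (· - s), hlarge]
  congr 2
  omega

theorem card_filter_eq_sum_blocks {β G : ℕ → ℕ} (hβG : ∀ i v, β i ≤ v ↔ i < G v)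
    (hG0 : G 0 = 0) (N s : ℕ) :
    #((range (G N)).filter fun i => s ≤ i ∧ β (i - s) = β i) =
      ∑ v ∈ range N, (G (v + 1) - G v - s) := by
  have hG : Monotone G := fun v w hvw =>
    le_of_forall_lt fun i hi => (hβG i w).1 (((hβG i v).2 hi).trans hvw)
  have hpos : ∀ i, 0 < β i := fun i => by have := hβG i 0; omega
  have hblock : ∀ i v, β i = v + 1 ↔ G v ≤ i ∧ i < G (v + 1) := fun i v => by
    have := hβG i v; have := hβG i (v + 1); omega
  rw [card_eq_sum_card_fiberwise (f := fun i => β i - 1) (t := range N)]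
  · refine sum_congr rfl fun v hv => ?_
    rw [Nat.sub_sub, ← Nat.card_Ico]
    congr 1
    ext i
    have := hG (show v + 1 ≤ N from mem_range.1 hv)
    have := hblock i v
    have := hblock (i - s) v
    have := hpos i
    simp only [mem_filter, mem_range, mem_Ico]
    omega
  · intro i hi
    have := (hβG i N).2 (mem_range.1 (mem_filter.1 hi).1)
    have := hpos i
    simp only [coe_range, Set.mem_Iio]
    omega

theorem card_filter_ceilDiv_eq {n m k l : ℕ} (hn : 0 < n) (hm : 0 < m) (hl : l < m)
    (hnkl : n = m * k + l) (s : ℕ) :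
    #((range n).filter fun i => s ≤ i ∧ ((i - s + 1) * m) ⌈/⌉ n = ((i + 1) * m) ⌈/⌉ n) =
      l * (k + 1 - s) + (m - l) * (k - s) := by
  set G : ℕ → ℕ := fun v => v * n / m
  have hG : Monotone G := fun v w hvw => Nat.div_le_div_right (Nat.mul_le_mul_right n hvw)
  have hβG : ∀ i v, ((i + 1) * m) ⌈/⌉ n ≤ v ↔ i < G v := fun i v => by
    rw [ceilDiv_le_iff_le_mul hn, Nat.lt_iff_add_one_le, Nat.le_div_iff_mul_le hm, mul_comm n]
  have hGm : G m = n := Nat.mul_div_cancel_left n hm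
  have hblocks := card_filter_eq_sum_blocks hβG (by simp [G]) m s
  rw [hGm] at hblocks
  rw [hblocks, sum_tsub_of_eq_or_eq_succ (range m) _ (k := k) (l := l)]
  · simp
  · intro v _
    simp only [G, add_one_mul]
    rw [hnkl]
    exact Nat.add_div_sub_div_eq_or hm hl _
  · rw [sum_range_tsub hG, hGm, card_range, hnkl]
    simp [G]

namespace Matrix

theorem rank_eq_card_of_row_eq_single {K m n : Type*} [Field K] [Fintype m] [Fintype n]
    [DecidableEq m] [DecidableEq n] (A : Matrix m n K) (T : Finset m) (τ : m → n)
    (hτ : Set.InjOn τ T) (hA : ∀ i, A i = if i ∈ T then Pi.single (τ i) 1 else 0) :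
    A.rank = #T := by
  have hrow : ∀ i : T, A i = Pi.basisFun K n (τ i) := fun i => by
    rw [hA, if_pos i.2, Pi.basisFun_apply]
  have hli : LinearIndependent K fun i : T => A i := by
    simp_rw [hrow]
    exact (Pi.basisFun K n).linearIndependent.comp _ (Set.injOn_iff_injective.1 hτ)
  have hspan : Submodule.span K (Set.range A.row) =
      Submodule.span K (Set.range fun i : T => A i) := by
    refine le_antisymm (Submodule.span_le.2 ?_) (Submodule.span_mono ?_)
    · rintro _ ⟨i, rfl⟩
      by_cases hi : i ∈ T
      · exact Submodule.subset_span ⟨⟨i, hi⟩, rfl⟩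
      · simp only [row, hA, if_neg hi, SetLike.mem_coe]
        exact Submodule.zero_mem _
    · rintro _ ⟨i, rfl⟩
      exact ⟨i, rfl⟩
  rw [rank_eq_finrank_span_row, hspan, finrank_span_eq_card hli, Fintype.card_coe]

variable {R : Type*} [Semiring R]

def blockShift (n : ℕ) (β : ℕ → ℕ) : Matrix (Fin n) (Fin n) R :=
  of fun i j => if (i : ℕ) = j + 1 ∧ β i = β j then 1 else 0

theorem blockShift_pow {n : ℕ} {β : ℕ → ℕ} (hβ : Monotone β) (s : ℕ) :
    blockShift n β ^ s =
      of fun i j : Fin n => if (i : ℕ) = j + s ∧ β i = β j then (1 : R) else 0 := by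
  induction s with
  | zero =>
    ext i j
    by_cases h : (i : ℕ) = j <;> simp [one_apply, Fin.ext_iff, h]
  | succ s ih =>
    ext i j
    rw [pow_succ, ih, mul_apply]
    by_cases hj : (j : ℕ) + 1 < n
    · rw [sum_eq_single ⟨j + 1, hj⟩]
      · have h₁ := @hβ j (j + 1) (by omega)
        have h₂ : (i : ℕ) = j + (s + 1) → β (j + 1) ≤ β i := fun h => hβ (by omega)
        simp only [blockShift, of_apply, ite_zero_mul_ite_zero, mul_one, true_and]
        congr 1
        apply propext
        constructor <;> intro h <;> omega
      · intro x _ hx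
        simp only [blockShift, of_apply]
        exact mul_eq_zero_of_right _ (if_neg fun h => hx (Fin.ext h.1))
      · simp
    · simp only [blockShift, of_apply]
      rw [if_neg (by omega), sum_eq_zero]
      intro x _
      exact mul_eq_zero_of_right _ (if_neg (by omega))

theorem rank_blockShift_pow {K : Type*} [Field K] {n : ℕ} {β : ℕ → ℕ} (hβ : Monotone β)
    (s : ℕ) : (blockShift n β ^ s : Matrix (Fin n) (Fin n) K).rank =
      #((range n).filter fun i => s ≤ i ∧ β (i - s) = β i) := by
  classical
  rw [blockShift_pow hβ, rank_eq_card_of_row_eq_single _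
    (univ.filter fun i : Fin n => s ≤ (i : ℕ) ∧ β (i - s) = β i)
    (fun i => ⟨i - s, by omega⟩)]
  · rw [← Nat.Iio_eq_range, ← Fin.map_valEmbedding_univ, filter_map, card_map]
    rfl
  · intro i hi i' hi' h
    simp only [coe_filter, mem_univ, true_and, Set.mem_ofPred_eq, Fin.mk.injEq] at hi hi' h
    exact Fin.ext (by omega)
  · intro i
    ext j
    by_cases hi : s ≤ (i : ℕ) ∧ β (i - s) = β i
    · by_cases hj : (i : ℕ) = j + s
      · have hj' : (j : ℕ) = i - s := by omega
        rw [of_apply, if_pos ⟨hj, by rw [hj', hi.2]⟩, if_pos (by simpa using hi),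
          Pi.single_apply, if_pos (Fin.ext hj')]
      · simp only [of_apply, hj, false_and, ↓reduceIte, mem_filter, mem_univ, hi, and_self,
          Pi.single_apply, Fin.ext_iff, right_eq_ite_iff, zero_ne_one, imp_false]
        omega
    · simp only [mem_filter, mem_univ, true_and, if_neg hi, of_apply, Pi.zero_apply]
      refine if_neg fun ⟨hj, hβj⟩ => hi ?_
      rw [show (i : ℕ) - s = j by omega]
      exact ⟨by omega, hβj.symm⟩

end Matrix

open PowerSeries in
theorem reduction_eq_blockShift {K : Type*} [CommRing K] {n m : ℕ} (hn : 0 < n) (hm : 0 < m)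
    (a : Fin n → PowerSeries K)
    (hord : ∀ i : Fin n, X ^ (((i : ℕ) + 1) * m ⌈/⌉ n) ∣ a i)
    (R : Matrix (Fin n) (Fin n) (PowerSeries K))
    (hR : ∀ i j : Fin n, R i j =
      if (i : ℕ) = (j : ℕ) + 1 then 1
      else if (j : ℕ) = n - 1 then - a ⟨n - 1 - (i : ℕ), by omega⟩ else 0)
    (p : Fin n → ℕ) (hp : ∀ j : Fin n, p j = m - ((j : ℕ) + 1) * m ⌈/⌉ n)
    (M : Matrix (Fin n) (Fin n) K)
    (hM : ∀ i j : Fin n, M i j = if p j ≤ p i then coeff (p i - p j) (R i j) else 0) :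
    M = Matrix.blockShift n fun i => (i + 1) * m ⌈/⌉ n := by
  have hβ_le : ∀ i : Fin n, ((i : ℕ) + 1) * m ⌈/⌉ n ≤ m := fun i => by
    rw [ceilDiv_le_iff_le_mul hn]
    exact Nat.mul_le_mul_right m i.isLt
  ext i j
  rw [hM, hR, hp, hp, Matrix.blockShift, Matrix.of_apply]
  by_cases hij : (i : ℕ) = j + 1
  · have hmono := (gc_mul_ceilDiv hn).monotone_l
      (Nat.mul_le_mul_right m (by omega : (j : ℕ) + 1 ≤ i + 1))
    have := hβ_le i
    rw [if_pos hij, coeff_one]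
    split_ifs <;> first | rfl | omega
  · simp only [hij, false_and, if_false]
    by_cases hj : (j : ℕ) = n - 1
    · rw [if_pos hj]
      have hdvd : X ^ ((n - 1 - i + 1) * m ⌈/⌉ n) ∣ a ⟨n - 1 - i, by omega⟩ := hord _
      -- `⌈(i+1)m/n⌉ + ⌈(n-i)m/n⌉ ≥ ⌈(n+1)m/n⌉ > m`, so `p i < ord (a (n-1-i))`.
      have hsum : m < ((i : ℕ) + 1) * m ⌈/⌉ n + ((n - 1 - i + 1) * m) ⌈/⌉ n := by
        refine lt_of_lt_of_le ?_ (Nat.ceilDiv_add_le _ _ _)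
        rw [← add_mul, show (i : ℕ) + 1 + (n - 1 - i + 1) = n + 1 by omega, lt_iff_not_ge,
          ceilDiv_le_iff_le_mul hn]
        nlinarith
      have := hβ_le i
      split_ifs
      · rw [map_neg, X_pow_dvd_iff.1 hdvd _ (by omega), neg_zero]
      · rfl
    · rw [if_neg hj, map_zero, ite_self]

/-- Single-slope setting: `f(λ) = λⁿ + a₁λ^{n-1} + ⋯ + aₙ` over `ℂ[[t]]`, with
`ord_t(aₙ) = m > 0`, `ord_t(a_i) ≥ ⌈i·m/n⌉`, `n = m·k + l` with `0 ≤ l < m`, and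
`p_j = m - ⌈j·m/n⌉`. The reduction modulo `t` of `P⁻¹ · R(f) · P` (where
`P = diag(t^{p_j})` and `R(f)` is the companion matrix) is the complex matrix `M` with
`M i j = coeff_{p_i - p_j} (R i j)` if `p j ≤ p i` and `0` otherwise. Claim: `M` is
nilpotent with Jordan type the `m`-balanced partition `[(k+1)^l, k^{m-l}]` of `n`;
equivalently `rank (M^s) = l·(k+1-s) + (m-l)·(k-s)` (truncated subtraction) for all
`s`. -/
theorem stmt_12 (n m k l : ℕ) (hn : 0 < n) (hm : 0 < m) (hl : l < m)
    (hnkl : n = m * k + l)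
    (a : Fin n → PowerSeries ℂ)
    (hord : ∀ i : Fin n,
      (PowerSeries.X : PowerSeries ℂ) ^ ((((i : ℕ) + 1) * m + n - 1) / n) ∣ a i)
    (R : Matrix (Fin n) (Fin n) (PowerSeries ℂ))
    (hR : ∀ i j : Fin n, R i j =
      if (i : ℕ) = (j : ℕ) + 1 then 1
      else if (j : ℕ) = n - 1 then
        - a ⟨n - 1 - (i : ℕ), by omega⟩
      else 0)
    (p : Fin n → ℕ)
    (hp : ∀ j : Fin n, p j = m - (((j : ℕ) + 1) * m + n - 1) / n)
    (M : Matrix (Fin n) (Fin n) ℂ)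
    (hM : ∀ i j : Fin n, M i j =
      if p j ≤ p i then PowerSeries.coeff (p i - p j) (R i j) else 0) :
    ∀ s : ℕ, (M ^ s).rank = l * (k + 1 - s) + (m - l) * (k - s) := by
  intro s
  have hβ : Monotone fun i => (i + 1) * m ⌈/⌉ n :=
    (gc_mul_ceilDiv hn).monotone_l.comp fun i j hij => Nat.mul_le_mul_right m (by omega)
  rw [reduction_eq_blockShift hn hm a hord R hR p hp M hM, Matrix.rank_blockShift_pow hβ,
    card_filter_ceilDiv_eq hn hm hl hnkl]
end

section
/- With p_j defined as p_j = m − ⌈jm/(2n)⌉ for 1 ≤ j ≤ n and p_j = ⌈(2n+1−j)m/(2n)⌉ − 1 for n+1 ≤ j ≤ 2n (where 2n = mk + l, 0 ≤ l < m, m even), the strict descents p_i > p_{i+1} occur exactly at indices i = jk + ⌊jl/m⌋ for 1 ≤ j ≤ m/2 and i = jk + ⌈jl/m⌉ for m/2 + 1 ≤ j ≤ m − 1. -/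
private lemma ceil_le' {N : ℕ} (hN : 0 < N) (a j : ℕ) :
    (a + N - 1) / N ≤ j ↔ a ≤ j * N := by
  rw [← Nat.lt_succ_iff, Nat.div_lt_iff_lt_mul hN, Nat.succ_mul]
  omega

private lemma lt_ceil' {N : ℕ} (hN : 0 < N) (a j : ℕ) :
    j < (a + N - 1) / N ↔ j * N < a := by
  rw [← Nat.not_le, ceil_le' hN]; omega

private lemma ceil_eq' {N : ℕ} (hN : 0 < N) {a i : ℕ} (hi : 1 ≤ i)
    (h1 : (i - 1) * N < a) (h2 : a ≤ i * N) : (a + N - 1) / N = i := by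
  have := (ceil_le' hN a i).2 h2
  have := (lt_ceil' hN a (i - 1)).2 h1
  omega

private lemma floor_eq' {N : ℕ} (hN : 0 < N) {a i : ℕ}
    (h1 : i * N ≤ a) (h2 : a < (i + 1) * N) : a / N = i := by
  have := (Nat.le_div_iff_mul_le hN).2 h1
  have := (Nat.div_lt_iff_lt_mul hN).2 h2
  omega

/-- With `m` even, `2n = m*k + l`, `0 ≤ l < m`, and
`p_j = m - ⌈j·m/(2n)⌉` for `1 ≤ j ≤ n`, `p_j = ⌈(2n+1-j)·m/(2n)⌉ - 1` for
`n+1 ≤ j ≤ 2n`, the strict descents `p_i > p_{i+1}` occur exactly at the indices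
`i = j·k + ⌊j·l/m⌋` for `1 ≤ j ≤ m/2` and `i = j·k + ⌈j·l/m⌉` for
`m/2 + 1 ≤ j ≤ m - 1`. Floors/ceilings are written with natural division. -/
theorem stmt_15 (n m k l : ℕ) (hn : 0 < n) (hm : 0 < m) (hme : Even m) (hl : l < m)
    (h2n : 2 * n = m * k + l) (p : ℕ → ℕ)
    (hp : ∀ j, p j =
      if j ≤ n then m - (j * m + 2 * n - 1) / (2 * n)
      else ((2 * n + 1 - j) * m + 2 * n - 1) / (2 * n) - 1) :
    ∀ i, 1 ≤ i → i < 2 * n →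
      (p (i + 1) < p i ↔
        (∃ j, 1 ≤ j ∧ j ≤ m / 2 ∧ i = j * k + j * l / m) ∨
        (∃ j, m / 2 + 1 ≤ j ∧ j ≤ m - 1 ∧ i = j * k + (j * l + m - 1) / m)) := by
  obtain ⟨t, ht⟩ := hme
  have hN : 0 < 2 * n := by omega
  have hm2 : 2 ≤ m := by omega
  have hhalf : m / 2 = t := by omega
  -- index rewriting lemmas
  have key : ∀ j : ℕ, j * k + j * l / m = j * (2 * n) / m := by
    intro j
    have e : j * (2 * n) = j * l + j * k * m := by rw [h2n]; ring
    rw [e, Nat.add_mul_div_right _ _ hm, Nat.add_comm]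
  have key2 : ∀ j : ℕ, j * k + (j * l + m - 1) / m = (j * (2 * n) + m - 1) / m := by
    intro j
    have e0 : j * (2 * n) = j * l + j * k * m := by rw [h2n]; ring
    have e : j * (2 * n) + m - 1 = (j * l + m - 1) + j * k * m := by omega
    rw [e, Nat.add_mul_div_right _ _ hm, Nat.add_comm]
  intro i hi1 hi2
  constructor
  · -- forward direction
    intro hdes
    by_cases hin : i ≤ n
    · rcases eq_or_lt_of_le hin with hieq | hilt
      · -- i = n : witness j = m / 2
        refine Or.inl ⟨m / 2, by omega, le_rfl, ?_⟩
        rw [key, hhalf]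
        have e : t * (2 * n) = n * m := by rw [ht]; ring
        rw [e, Nat.mul_div_cancel _ hm, hieq]
      · -- 1 ≤ i ≤ n - 1
        have hi1n : i + 1 ≤ n := by omega
        rw [hp i, hp (i + 1), if_pos hin, if_pos hi1n] at hdes
        set F1 := (i * m + 2 * n - 1) / (2 * n) with hF1def
        set F2 := ((i + 1) * m + 2 * n - 1) / (2 * n) with hF2def
        have hF2m : F2 ≤ m := by
          rw [hF2def, ceil_le' hN]
          calc (i + 1) * m ≤ (2 * n) * m := by gcongr; omega
            _ = m * (2 * n) := by ring
        have hlt : F1 < F2 := by omega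
        have hF1pos : 0 < F1 := by
          rw [hF1def, lt_ceil' hN]
          have : 0 < i * m := Nat.mul_pos (by omega) hm
          omega
        refine Or.inl ⟨F1, hF1pos, ?_, ?_⟩
        · rw [hF1def, ceil_le' hN]
          have e : m / 2 * (2 * n) = n * m := by rw [hhalf, ht]; ring
          rw [e]
          exact Nat.mul_le_mul_right m (by omega)
        · rw [key]
          have h1 : i * m ≤ F1 * (2 * n) := (ceil_le' hN _ _).1 le_rfl
          have h2 : F1 * (2 * n) < (i + 1) * m := (lt_ceil' hN _ _).1 hlt
          exact (floor_eq' hm h1 h2).symm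
    · -- n + 1 ≤ i ≤ 2n - 1 : second half
      have hin1 : ¬ (i + 1 ≤ n) := by omega
      rw [hp i, hp (i + 1), if_neg hin, if_neg hin1] at hdes
      set a := 2 * n - i with hadef
      have ha1 : 1 ≤ a := by omega
      have han : a + 1 ≤ n := by omega
      have e1 : 2 * n + 1 - i = a + 1 := by omega
      have e2 : 2 * n + 1 - (i + 1) = a := by omega
      rw [e1, e2] at hdes
      set G1 := ((a + 1) * m + 2 * n - 1) / (2 * n) with hG1def
      set G2 := (a * m + 2 * n - 1) / (2 * n) with hG2def
      have hG2pos : 0 < G2 := by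
        rw [hG2def, lt_ceil' hN]
        have : 0 < a * m := Nat.mul_pos ha1 hm
        omega
      have hlt : G2 < G1 := by omega
      have hG1t : G1 ≤ m / 2 := by
        rw [hG1def, ceil_le' hN]
        have e : m / 2 * (2 * n) = n * m := by rw [hhalf, ht]; ring
        rw [e]
        exact Nat.mul_le_mul_right m han
      have hj'1 : 1 ≤ G2 := hG2pos
      have hj't : G2 ≤ m / 2 - 1 := by omega
      have hlow : a * m ≤ G2 * (2 * n) := (ceil_le' hN _ _).1 le_rfl
      have hhigh : G2 * (2 * n) < (a + 1) * m := (lt_ceil' hN _ _).1 hlt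
      refine Or.inr ⟨m - G2, by omega, by omega, ?_⟩
      rw [key2]
      have eX : (m - G2) * (2 * n) = m * (2 * n) - G2 * (2 * n) := Nat.sub_mul _ _ _
      have eam : a * m = 2 * n * m - i * m := by rw [hadef]; exact Nat.sub_mul _ _ _
      have eam1 : (a + 1) * m = a * m + m := by ring
      have eim : (i - 1) * m = i * m - 1 * m := Nat.sub_mul _ _ _
      have him : i * m ≤ 2 * n * m := Nat.mul_le_mul_right m (by omega)
      have hmm : m ≤ i * m := Nat.le_mul_of_pos_left m (by omega)
      have hB : G2 * (2 * n) ≤ m * (2 * n) := Nat.mul_le_mul_right (2 * n) (by omega)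
      have hcomm : m * (2 * n) = 2 * n * m := by ring
      refine (ceil_eq' hm hi1 ?_ ?_).symm
      · omega
      · omega
  · -- backward direction
    rintro (⟨j, hj1, hj2, hij⟩ | ⟨j, hj1, hj2, hij⟩)
    · -- first family
      rw [key] at hij
      have hlow : i * m ≤ j * (2 * n) := by
        rw [hij]; exact Nat.div_mul_le_self _ _
      have hhigh : j * (2 * n) < (i + 1) * m := by
        refine (Nat.div_lt_iff_lt_mul hm).1 ?_
        rw [← hij]
        omega
      have hin : i ≤ n := by
        have e : m / 2 * (2 * n) = n * m := by rw [hhalf, ht]; ring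
        have h1 : j * (2 * n) ≤ m / 2 * (2 * n) := by gcongr
        have h2 : i * m ≤ n * m := by omega
        exact Nat.le_of_mul_le_mul_right h2 hm
      rcases eq_or_lt_of_le hin with hieq | hilt
      · -- i = n : always a descent
        have hin1 : ¬ (i + 1 ≤ n) := by omega
        rw [hp i, hp (i + 1), if_pos hin, if_neg hin1]
        have e2 : 2 * n + 1 - (i + 1) = n := by omega
        rw [e2, hieq]
        have eFn : (n * m + 2 * n - 1) / (2 * n) = t := by
          refine ceil_eq' hN (by omega) ?_ ?_
          · have e : (t - 1) * (2 * n) = t * (2 * n) - 1 * (2 * n) := Nat.sub_mul _ _ _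
            have e' : t * (2 * n) = n * m := by rw [ht]; ring
            have e2n : 2 * n ≤ n * m := by
              calc 2 * n = n * 2 := by ring
                _ ≤ n * m := Nat.mul_le_mul_left n hm2
            omega
          · have e' : t * (2 * n) = n * m := by rw [ht]; ring
            omega
        rw [eFn]
        omega
      · -- i < n
        have hin1 : i + 1 ≤ n := by omega
        rw [hp i, hp (i + 1), if_pos hin, if_pos hin1]
        set F1 := (i * m + 2 * n - 1) / (2 * n) with hF1def
        set F2 := ((i + 1) * m + 2 * n - 1) / (2 * n) with hF2def
        have h1 : F1 ≤ j := by rw [hF1def, ceil_le' hN]; exact hlow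
        have h2 : j < F2 := by rw [hF2def, lt_ceil' hN]; exact hhigh
        have hF2m : F2 ≤ m := by
          rw [hF2def, ceil_le' hN]
          calc (i + 1) * m ≤ (2 * n) * m := by gcongr; omega
            _ = m * (2 * n) := by ring
        omega
    · -- second family
      rw [key2] at hij
      set X := j * (2 * n) with hXdef
      have hXle : X ≤ i * m := by
        have h' : (X + m - 1) / m ≤ i := le_of_eq hij.symm
        exact (ceil_le' hm _ _).1 h'
      have hXgt : (i - 1) * m < X := by
        have h' : i - 1 < (X + m - 1) / m := by rw [← hij]; omega
        exact (lt_ceil' hm _ _).1 h'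
      -- i ≥ n + 1
      have hin : ¬ (i ≤ n) := by
        intro hcon
        have e : (m / 2 + 1) * (2 * n) = n * m + 2 * n := by rw [hhalf, ht]; ring
        have h1 : (m / 2 + 1) * (2 * n) ≤ X := by
          rw [hXdef]; exact Nat.mul_le_mul_right _ hj1
        have h2 : i * m ≤ n * m := Nat.mul_le_mul_right m hcon
        omega
      have hin1 : ¬ (i + 1 ≤ n) := by omega
      rw [hp i, hp (i + 1), if_neg hin, if_neg hin1]
      set a := 2 * n - i with hadef
      have ha1 : 1 ≤ a := by omega
      have e1 : 2 * n + 1 - i = a + 1 := by omega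
      have e2 : 2 * n + 1 - (i + 1) = a := by omega
      rw [e1, e2]
      set G1 := ((a + 1) * m + 2 * n - 1) / (2 * n) with hG1def
      set G2 := (a * m + 2 * n - 1) / (2 * n) with hG2def
      have hG2pos : 0 < G2 := by
        rw [hG2def, lt_ceil' hN]
        have : 0 < a * m := Nat.mul_pos ha1 hm
        omega
      -- set j' = m - j, show a*m ≤ j'*2n < (a+1)*m
      have eX : (m - j) * (2 * n) = m * (2 * n) - X := by
        rw [hXdef]; exact Nat.sub_mul _ _ _
      have eam : a * m = 2 * n * m - i * m := by rw [hadef]; exact Nat.sub_mul _ _ _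
      have eam1 : (a + 1) * m = a * m + m := by ring
      have eim : (i - 1) * m = i * m - 1 * m := Nat.sub_mul _ _ _
      have him : i * m ≤ 2 * n * m := Nat.mul_le_mul_right m (by omega)
      have hmm : m ≤ i * m := Nat.le_mul_of_pos_left m (by omega)
      have hXub : X ≤ m * (2 * n) := by
        rw [hXdef]; exact Nat.mul_le_mul_right (2 * n) (by omega)
      have hcomm : m * (2 * n) = 2 * n * m := by ring
      have hlow : a * m ≤ (m - j) * (2 * n) := by omega
      have hhigh : (m - j) * (2 * n) < (a + 1) * m := by omega
      have h1 : G2 ≤ m - j := by rw [hG2def, ceil_le' hN]; exact hlow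
      have h2 : m - j < G1 := by rw [hG1def, lt_ceil' hN]; exact hhigh
      omega
end
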